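/- arXiv:1402.3962 — 3 statements merged into one kernel-verified Lean document; each statement's English description precedes it below -/
import Mathlib

section
/- Let m, |r₂|, |V| be natural numbers with m = |V|²·|r₂| + 1. Let a₁, a₂ ∈ ℕ, b₁, b₂ ∈ ℕ with b₁, b₂ ≤ |V|·|r₂| (weights bounded by |r₂| over cycles of length at most |V|), and 1 ≤ n₁, n₂ ≤ |V|. If a₁/n₁ < a₂/n₂ then (a₁·m − b₁)/n₁ < (a₂·m − b₂)/n₂. -/
theorem mp_reduction_strict
    (V r₂ a₁ a₂ b₁ b₂ n₁ n₂ m : ℕ)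
    (hm : m = V ^ 2 * r₂ + 1)
    (hn₁ : 1 ≤ n₁) (hn₁V : n₁ ≤ V)
    (hn₂ : 1 ≤ n₂) (hn₂V : n₂ ≤ V)
    (hb₁ : b₁ ≤ n₁ * r₂) (hb₂ : b₂ ≤ n₂ * r₂)
    (h : (a₁ : ℚ) / n₁ < (a₂ : ℚ) / n₂) :
    ((a₁ : ℚ) * m - b₁) / n₁ < ((a₂ : ℚ) * m - b₂) / n₂ := by
  have hn₁' : (0:ℚ) < n₁ := by exact_mod_cast hn₁
  have hn₂' : (0:ℚ) < n₂ := by exact_mod_cast hn₂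
  rw [div_lt_div_iff₀ hn₁' hn₂'] at h ⊢
  have hcross : (a₁:ℚ) * n₂ + 1 ≤ (a₂:ℚ) * n₁ := by
    have : a₁ * n₂ < a₂ * n₁ := by exact_mod_cast h
    have : a₁ * n₂ + 1 ≤ a₂ * n₁ := this
    exact_mod_cast this
  have hbb : b₂ * n₁ < m := by
    calc b₂ * n₁ ≤ (n₂ * r₂) * n₁ := Nat.mul_le_mul_right _ hb₂
      _ ≤ (V * r₂) * V := by
          apply Nat.mul_le_mul (Nat.mul_le_mul_right _ hn₂V) hn₁V
      _ < V ^ 2 * r₂ + 1 := by ring_nf; omega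
      _ = m := hm.symm
  have hbb' : (b₂:ℚ) * n₁ < m := by exact_mod_cast hbb
  have hm1 : (1:ℚ) ≤ m := by
    have : 1 ≤ m := by omega
    exact_mod_cast this
  have hb1' : (0:ℚ) ≤ b₁ := Nat.cast_nonneg _
  nlinarith [mul_le_mul_of_nonneg_right hcross (le_trans zero_le_one hm1)]
end

section
/- With the same hypotheses (m = |V|²·|r₂| + 1, cycle lengths n₁, n₂ ≤ |V|, weights b_i ≤ n_i·|r₂|), one has (a₁/n₁, b₁/n₁) ≼₁ (a₂/n₂, b₂/n₂) if and only if (a₁·m − b₁)/n₁ ≤ (a₂·m − b₂)/n₂, where ≼₁ is the lexicographic order with (x₁,x₂) ≼₁ (y₁,y₂) iff x₁ < y₁ or (x₁ = y₁ and x₂ ≥ y₂). -/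
theorem mp_reduction_iff
    (V r₂ a₁ a₂ b₁ b₂ n₁ n₂ m : ℕ)
    (hm : m = V ^ 2 * r₂ + 1)
    (hn₁ : 1 ≤ n₁) (hn₁V : n₁ ≤ V)
    (hn₂ : 1 ≤ n₂) (hn₂V : n₂ ≤ V)
    (hb₁ : b₁ ≤ n₁ * r₂) (hb₂ : b₂ ≤ n₂ * r₂) :
    ((a₁ : ℚ) / n₁ < (a₂ : ℚ) / n₂ ∨
      ((a₁ : ℚ) / n₁ = (a₂ : ℚ) / n₂ ∧ (b₁ : ℚ) / n₁ ≥ (b₂ : ℚ) / n₂)) ↔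
    ((a₁ : ℚ) * m - b₁) / n₁ ≤ ((a₂ : ℚ) * m - b₂) / n₂ := by
  have h1 : (0:ℚ) < n₁ := by exact_mod_cast hn₁
  have h2 : (0:ℚ) < n₂ := by exact_mod_cast hn₂
  have hB1n : b₁ * n₂ ≤ V ^ 2 * r₂ := by
    calc b₁ * n₂ ≤ (n₁ * r₂) * n₂ := Nat.mul_le_mul_right _ hb₁
    _ ≤ (V * r₂) * V := by
        apply Nat.mul_le_mul (Nat.mul_le_mul_right _ hn₁V) hn₂V
    _ = V ^ 2 * r₂ := by ring
  have hB2n : b₂ * n₁ ≤ V ^ 2 * r₂ := by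
    calc b₂ * n₁ ≤ (n₂ * r₂) * n₁ := Nat.mul_le_mul_right _ hb₂
    _ ≤ (V * r₂) * V := by
        apply Nat.mul_le_mul (Nat.mul_le_mul_right _ hn₂V) hn₁V
    _ = V ^ 2 * r₂ := by ring
  have hB1 : (b₁:ℚ) * n₂ ≤ (m:ℚ) - 1 := by
    have : ((b₁ * n₂ : ℕ) : ℚ) ≤ ((V ^ 2 * r₂ : ℕ) : ℚ) := by exact_mod_cast hB1n
    push_cast at this
    have hm' : (m:ℚ) = (V:ℚ) ^ 2 * r₂ + 1 := by exact_mod_cast hm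
    linarith
  have hB2 : (b₂:ℚ) * n₁ ≤ (m:ℚ) - 1 := by
    have : ((b₂ * n₁ : ℕ) : ℚ) ≤ ((V ^ 2 * r₂ : ℕ) : ℚ) := by exact_mod_cast hB2n
    push_cast at this
    have hm' : (m:ℚ) = (V:ℚ) ^ 2 * r₂ + 1 := by exact_mod_cast hm
    linarith
  have hb1nn : (0:ℚ) ≤ (b₁:ℚ) * n₂ := by positivity
  have hb2nn : (0:ℚ) ≤ (b₂:ℚ) * n₁ := by positivity
  have hm0 : (0:ℚ) ≤ (m:ℚ) := by positivity
  rw [div_lt_div_iff₀ h1 h2, div_eq_div_iff h1.ne' h2.ne', ge_iff_le, div_le_div_iff₀ h2 h1,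
    div_le_div_iff₀ h1 h2]
  constructor
  · rintro (h | ⟨he, hb⟩)
    · have hnat : a₁ * n₂ < a₂ * n₁ := by exact_mod_cast h
      have hq : (a₁:ℚ) * n₂ + 1 ≤ (a₂:ℚ) * n₁ := by exact_mod_cast hnat
      nlinarith [mul_le_mul_of_nonneg_right hq hm0]
    · nlinarith [mul_le_mul_of_nonneg_right he.le hm0,
        mul_le_mul_of_nonneg_right he.ge hm0]
  · intro h
    rcases lt_trichotomy ((a₁:ℚ) * n₂) ((a₂:ℚ) * n₁) with hlt | heq | hgt
    · exact Or.inl hlt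
    · refine Or.inr ⟨heq, ?_⟩
      nlinarith [mul_le_mul_of_nonneg_right heq.le hm0,
        mul_le_mul_of_nonneg_right heq.ge hm0]
    · exfalso
      have hnat : a₂ * n₁ < a₁ * n₂ := by exact_mod_cast hgt
      have hq : (a₂:ℚ) * n₁ + 1 ≤ (a₁:ℚ) * n₂ := by exact_mod_cast hnat
      nlinarith [mul_le_mul_of_nonneg_right hq hm0]
end

section
/- Suppose for all n, Σ_{k<n} r(k) ≤ J₁(n)·β + J₂(n)·R + |V|·R, where J₁(n) + J₂(n) ≤ n, β, R ≥ 0 are reals, |V| ∈ ℕ is fixed, liminf J₂(n)/n = 0, and limsup J₁(n)/n ≤ 1. Then liminf (1/n)·Σ_{k<n} r(k) ≤ β. -/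
open Filter

theorem meanpayoff_upper_bound
    (r : ℕ → ℝ)
    (J₁ J₂ : ℕ → ℕ) (V : ℕ) (β R : ℝ)
    (hβ : 0 ≤ β) (hR : 0 ≤ R)
    (hJ₁ : ∀ n, J₁ n ≤ n) (hJ₂ : ∀ n, J₂ n ≤ n)
    (hsum : ∀ n, ∑ k ∈ Finset.range n, r k ≤
      (J₁ n : ℝ) * β + (J₂ n : ℝ) * R + (V : ℝ) * R)
    (hJ₂lim : Filter.liminf (fun n : ℕ => (J₂ n : ℝ) / n) Filter.atTop = 0) :
    Filter.liminf (fun n : ℕ => (∑ k ∈ Finset.range n, r k) / n)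
      Filter.atTop ≤ β := by
  have hbdd : ∀ n : ℕ, (J₂ n : ℝ) / n ≤ 1 := by
    intro n
    rcases Nat.eq_zero_or_pos n with h | h
    · simp [h]
    · rw [div_le_one (by exact_mod_cast h)]
      exact_mod_cast hJ₂ n
  have hf : ∀ ε > (0:ℝ), ∃ᶠ n in atTop,
      (∑ k ∈ Finset.range n, r k) / n ≤ β + ε := by
    intro ε hε
    set δ : ℝ := ε / (2 * (R + 1)) with hδdef
    have hδ : 0 < δ := by positivity
    have hδR : δ * R ≤ ε / 2 := by
      rw [hδdef, div_mul_eq_mul_div, div_le_div_iff₀ (by positivity) (by norm_num)]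
      nlinarith
    have hfreq : ∃ᶠ n in atTop, (J₂ n : ℝ) / n < δ := by
      by_contra h
      rw [Filter.not_frequently] at h
      have hle : δ ≤ Filter.liminf (fun n : ℕ => (J₂ n : ℝ) / n) Filter.atTop := by
        apply Filter.le_liminf_of_le
        · exact (Filter.isBoundedUnder_of ⟨1, hbdd⟩).isCoboundedUnder_ge
        · exact h.mono fun n hn => le_of_not_gt hn
      rw [hJ₂lim] at hle
      linarith
    have hVR : Tendsto (fun n : ℕ => (V : ℝ) * R / n) atTop (nhds 0) :=
      tendsto_const_div_atTop_nhds_zero_nat _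
    have hev : ∀ᶠ n : ℕ in atTop, (V : ℝ) * R / n ≤ ε / 2 :=
      hVR.eventually (eventually_le_nhds (by linarith))
    refine (hfreq.and_eventually (hev.and (eventually_ge_atTop 1))).mono ?_
    rintro n ⟨h2, h3, h4⟩
    have hn : (0:ℝ) < n := by exact_mod_cast h4
    rw [div_le_iff₀ hn]
    have hJ1 : (J₁ n : ℝ) ≤ n := by exact_mod_cast hJ₁ n
    have h2' : (J₂ n : ℝ) < δ * n := by
      rw [div_lt_iff₀ hn] at h2; linarith
    have h3' : (V : ℝ) * R ≤ ε / 2 * n := by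
      rw [div_le_iff₀ hn] at h3; linarith
    have := hsum n
    nlinarith [mul_le_mul_of_nonneg_right hJ1 hβ,
      mul_lt_mul_of_pos_right h2' (lt_of_lt_of_le hδ (le_of_eq rfl)),
      mul_le_mul_of_nonneg_right (le_of_lt h2') hR,
      mul_le_mul_of_nonneg_right hδR (le_of_lt hn)]
  rw [Filter.liminf_eq]
  apply Real.sSup_le _ hβ
  intro a ha
  refine le_of_forall_pos_le_add fun ε hε => ?_
  obtain ⟨n, h1, h2⟩ := ((hf ε hε).and_eventually ha).exists
  linarith
end
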